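/- Let Q be a finite set of points in the plane with p, q ∈ Q distinct, and let r ∉ Q, such that no three points of Q ∪ {r} are collinear and no four points of Q ∪ {r} are concyclic. Suppose there exists a closed disc with p, q on its boundary whose open interior contains no point of Q ∖ {p,q}, but every closed disc with p, q on its boundary has a point of (Q ∪ {r}) ∖ {p,q} in its open interior. Then there exists a closed disc with p, r on its boundary whose open interior contains no point of (Q ∪ {r}) ∖ {p, r}, and likewise a closed disc with q, r on its boundary whose open interior contains no point of (Q ∪ {r}) ∖ {q, r}. -/
import Mathlib


noncomputable section

/-- Points of the Euclidean plane. -/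
abbrev Pt := EuclideanSpace ℝ (Fin 2)

/-- The edge `pq` is Delaunay with respect to the planar point set `S`: there is a
closed disc with `p` and `q` on its boundary circle whose open interior contains no
point of `S \ {p, q}`. -/
def DelaunayEdge (S : Set Pt) (p q : Pt) : Prop :=
  ∃ c : Pt, ∃ ρ : ℝ, dist p c = ρ ∧ dist q c = ρ ∧
    ∀ x ∈ S, x ≠ p → x ≠ q → ¬ dist x c < ρ

open RealInnerProductSpace in
/-- Shrinking lemma: if `p` is on the boundary of a disc `(c, ρ)` whose open interior
contains `r` and contains no other point of `S` besides possibly `p` and `r`, then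
the edge `pr` is Delaunay in `S`. -/
lemma shrinkLemma (S : Set Pt) (p r c : Pt) (ρ : ℝ) (hpc : dist p c = ρ)
    (hrc : dist r c < ρ)
    (hS : ∀ x ∈ S, x ≠ p → dist x c < ρ → x = r) :
    DelaunayEdge S p r := by
  set v : Pt := r - p with hv
  set w : Pt := c - p with hw
  have hwρ : ‖w‖ = ρ := by rw [hw, ← dist_eq_norm, dist_comm]; exact hpc
  have hvw : ‖v - w‖ < ‖w‖ := by
    have : r - c = v - w := by rw [hv, hw]; abel
    rw [hwρ, ← this, ← dist_eq_norm]; exact hrc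
  have hvne : v ≠ 0 := by
    intro h
    rw [h, zero_sub, norm_neg] at hvw
    exact lt_irrefl _ hvw
  have hvpos : 0 < ‖v‖ := norm_pos_iff.mpr hvne
  have hsq : ‖v - w‖ ^ 2 < ‖w‖ ^ 2 := by
    have h1 : (0:ℝ) ≤ ‖v - w‖ := norm_nonneg _
    nlinarith
  have hexp : ‖v - w‖ ^ 2 = ‖v‖ ^ 2 - 2 * ⟪v, w⟫ + ‖w‖ ^ 2 := by
    rw [norm_sub_sq_real]
  have hkey : ‖v‖ ^ 2 < 2 * ⟪v, w⟫ := by nlinarith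
  have hden : 0 < 2 * ⟪v, w⟫ := lt_trans (by positivity) hkey
  set t : ℝ := ‖v‖ ^ 2 / (2 * ⟪v, w⟫) with ht
  have ht0 : 0 < t := div_pos (by positivity) hden
  have ht1 : t < 1 := (div_lt_one hden).mpr hkey
  have htmul : t * (2 * ⟪v, w⟫) = ‖v‖ ^ 2 := div_mul_cancel₀ _ (ne_of_gt hden)
  refine ⟨p + t • w, t * ‖w‖, ?_, ?_, ?_⟩
  · rw [dist_eq_norm]
    simp only [sub_add_cancel_left, norm_neg, norm_smul, Real.norm_eq_abs,
      abs_of_pos ht0]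
  · rw [dist_eq_norm]
    have hrw : r - (p + t • w) = v - t • w := by rw [hv]; abel
    rw [hrw]
    have hsq2 : ‖v - t • w‖ ^ 2 = (t * ‖w‖) ^ 2 := by
      rw [norm_sub_sq_real, norm_smul, real_inner_smul_right, Real.norm_eq_abs,
        abs_of_pos ht0]
      nlinarith
    have h1 : (0:ℝ) ≤ ‖v - t • w‖ := norm_nonneg _
    have h2 : (0:ℝ) ≤ t * ‖w‖ := by positivity
    nlinarith
  · intro x hx hxp hxr hlt
    have hcc : dist (p + t • w) c = (1 - t) * ‖w‖ := by
      rw [dist_eq_norm]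
      have : p + t • w - c = -((1 - t) • w) := by
        rw [hw]
        module
      rw [this, norm_neg, norm_smul, Real.norm_eq_abs, abs_of_pos (by linarith)]
    have hxc : dist x c < ρ := by
      calc dist x c ≤ dist x (p + t • w) + dist (p + t • w) c := dist_triangle _ _ _
        _ < t * ‖w‖ + (1 - t) * ‖w‖ := by rw [hcc]; linarith
        _ = ‖w‖ := by ring
        _ = ρ := hwρ
    exact hxr (hS x hx hxp hxc)

/-- If the edge `pq` is Delaunay in the finite set `Q` but not in `Q ∪ {r}` (where the
points are in general position: no three collinear, no four concyclic), then both edges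
`pr` and `qr` are Delaunay in `Q ∪ {r}`. -/
theorem stmt10 (Q : Set Pt) (hQfin : Q.Finite) (p q r : Pt)
    (hp : p ∈ Q) (hq : q ∈ Q) (hpq : p ≠ q) (hr : r ∉ Q)
    (hcol : ∀ x ∈ Q ∪ {r}, ∀ y ∈ Q ∪ {r}, ∀ z ∈ Q ∪ {r},
      x ≠ y → x ≠ z → y ≠ z → ¬ Collinear ℝ ({x, y, z} : Set Pt))
    (hcirc : ∀ w ∈ Q ∪ {r}, ∀ x ∈ Q ∪ {r}, ∀ y ∈ Q ∪ {r}, ∀ z ∈ Q ∪ {r},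
      w ≠ x → w ≠ y → w ≠ z → x ≠ y → x ≠ z → y ≠ z →
        ¬ ∃ c : Pt, ∃ ρ : ℝ,
          dist w c = ρ ∧ dist x c = ρ ∧ dist y c = ρ ∧ dist z c = ρ)
    (hDel : DelaunayEdge Q p q)
    (hNot : ¬ DelaunayEdge (Q ∪ {r}) p q) :
    DelaunayEdge (Q ∪ {r}) p r ∧ DelaunayEdge (Q ∪ {r}) q r := by
  obtain ⟨c, ρ, hpc, hqc, hemp⟩ := hDel
  have hrc : dist r c < ρ := by
    by_contra h
    refine hNot ⟨c, ρ, hpc, hqc, fun x hx hxp hxq => ?_⟩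
    rcases hx with hx | hx
    · exact hemp x hx hxp hxq
    · rw [Set.mem_singleton_iff] at hx
      subst hx
      exact h
  constructor
  · refine shrinkLemma _ p r c ρ hpc hrc fun x hx hxp hxc => ?_
    rcases hx with hx | hx
    · by_contra hxr
      rcases eq_or_ne x q with hxq | hxq
      · subst hxq; rw [hqc] at hxc; exact lt_irrefl _ hxc
      · exact hemp x hx hxp hxq hxc
    · exact hx
  · refine shrinkLemma _ q r c ρ hqc hrc fun x hx hxq hxc => ?_
    rcases hx with hx | hx
    · by_contra hxr
      rcases eq_or_ne x p with hxp | hxp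
      · subst hxp; rw [hpc] at hxc; exact lt_irrefl _ hxc
      · exact hemp x hx hxp hxq hxc
    · exact hx
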